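/- arXiv:1804.04319 — 3 statements merged into one kernel-verified Lean document; each statement's English description precedes it below -/
import Mathlib

section
/- Let m, t, r be natural numbers. Let v' be a positive definite symmetric real m×m matrix, v₂ a symmetric real t×t matrix, T a symmetric real r×r matrix, y'₁ a real m×t matrix, y'₂ a real m×r matrix, y₂ a real t×r matrix, N₂ a symmetric real t×t matrix, R₂ a real t×r matrix, and M a symmetric real r×r matrix. Set Δ := v₂ - y'₁ᵀ v'⁻¹ y'₁ and η := y₂ - y'₁ᵀ v'⁻¹ y'₂, and assume Δ is invertible and that the (m+t)×(m+t) block matrix v := [[v', y'₁],[y'₁ᵀ, v₂]] is invertible. Set N := [[N₂, (1/2)R₂],[(1/2)R₂ᵀ, M]], T' := [[v₂, y₂],[y₂ᵀ, T]], let y' := [y'₁ | y'₂] be the m×(t+r) matrix obtained by juxtaposing y'₁ and y'₂, and let y be the (m+t)×r matrix obtained by stacking y'₂ on top of y₂. Then Tr(N·(T' - y'ᵀ v'⁻¹ y')) - Tr(M·(T - yᵀ v⁻¹ y)) = Tr(N · [[Δ, η],[ηᵀ, ηᵀΔ⁻¹η]]). -/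
/-!
Inverting `v` through the Schur complement `Δ` of `v'` gives
`yᵀ v⁻¹ y = y'₂ᵀ v'⁻¹ y'₂ + ηᵀ Δ⁻¹ η`, while `T' - y'ᵀ v'⁻¹ y' = [[Δ, η], [ηᵀ, T - y'₂ᵀ v'⁻¹ y'₂]]`
because `v'⁻¹` is symmetric. The two block matrices paired with `N` thus differ only in the
lower-right corner, which contributes `Tr(M · (T - yᵀ v⁻¹ y))` to the trace.
-/

open Matrix

namespace Matrix

variable {α : Type*} {l m n o : Type*}

theorem fromBlocks_sub [Sub α] (A A' : Matrix l n α) (B B' : Matrix l o α)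
    (C C' : Matrix m n α) (D D' : Matrix m o α) :
    fromBlocks A B C D - fromBlocks A' B' C' D' =
      fromBlocks (A - A') (B - B') (C - C') (D - D') := by
  ext (_ | _) (_ | _) <;> rfl

theorem trace_fromBlocks [Fintype m] [Fintype n] [AddCommMonoid α] (A : Matrix m m α)
    (B : Matrix m n α) (C : Matrix n m α) (D : Matrix n n α) :
    trace (fromBlocks A B C D) = trace A + trace D := by
  simp [trace, Fintype.sum_sum_type]

theorem trace_fromBlocks_mul_sub_trace_mul [Fintype m] [Fintype n] [CommRing α]
    (P : Matrix m m α) (Q : Matrix m n α) (R : Matrix n m α) (S : Matrix n n α)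
    (A : Matrix m m α) (B : Matrix m n α) (C : Matrix n m α) (D E : Matrix n n α) :
    trace (fromBlocks P Q R S * fromBlocks A B C D) - trace (S * (D - E)) =
      trace (fromBlocks P Q R S * fromBlocks A B C E) := by
  simp only [fromBlocks_multiply, trace_fromBlocks, Matrix.mul_sub, trace_add, trace_sub]
  abel

variable [CommRing α] [Fintype m] [Fintype n] [DecidableEq m] [DecidableEq n]

theorem inv_fromBlocks_of_isUnit_det₁₁ (A : Matrix m m α) (B : Matrix m n α)
    (C : Matrix n m α) (D : Matrix n n α) (hA : IsUnit A.det)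
    (hS : IsUnit (D - C * A⁻¹ * B).det) :
    (fromBlocks A B C D)⁻¹ =
      fromBlocks (A⁻¹ + A⁻¹ * B * (D - C * A⁻¹ * B)⁻¹ * C * A⁻¹)
        (-(A⁻¹ * B * (D - C * A⁻¹ * B)⁻¹)) (-((D - C * A⁻¹ * B)⁻¹ * C * A⁻¹))
        (D - C * A⁻¹ * B)⁻¹ := by
  let := invertibleOfIsUnitDet A hA
  let := invertibleOfIsUnitDet _ hS
  let := fromBlocks₁₁Invertible A B C D
  rw [← invOf_eq_nonsing_inv, invOf_fromBlocks₁₁_eq]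
  simp only [invOf_eq_nonsing_inv]

theorem fromCols_mul_inv_fromBlocks_mul_fromRows (A : Matrix m m α) (B : Matrix m n α)
    (C : Matrix n m α) (D : Matrix n n α) (X : Matrix l m α) (Y : Matrix l n α)
    (U : Matrix m o α) (V : Matrix n o α) (hA : IsUnit A.det)
    (hS : IsUnit (D - C * A⁻¹ * B).det) :
    fromCols X Y * (fromBlocks A B C D)⁻¹ * fromRows U V =
      X * A⁻¹ * U + (Y - X * A⁻¹ * B) * (D - C * A⁻¹ * B)⁻¹ * (V - C * A⁻¹ * U) := by
  rw [inv_fromBlocks_of_isUnit_det₁₁ A B C D hA hS, fromCols_mul_fromBlocks,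
    fromCols_mul_fromRows]
  simp only [Matrix.mul_add, Matrix.add_mul, Matrix.mul_sub, Matrix.sub_mul, Matrix.mul_neg,
    Matrix.neg_mul, Matrix.mul_assoc]
  abel

end Matrix

theorem trace_identity_fourierJacobi_general {m t r : ℕ}
    (v' : Matrix (Fin m) (Fin m) ℝ) (v₂ : Matrix (Fin t) (Fin t) ℝ)
    (T : Matrix (Fin r) (Fin r) ℝ) (y'₁ : Matrix (Fin m) (Fin t) ℝ)
    (y'₂ : Matrix (Fin m) (Fin r) ℝ) (y₂ : Matrix (Fin t) (Fin r) ℝ)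
    (N₂ : Matrix (Fin t) (Fin t) ℝ) (R₂ : Matrix (Fin t) (Fin r) ℝ)
    (M : Matrix (Fin r) (Fin r) ℝ)
    (hv' : v'.PosDef)
    (hΔ : IsUnit (v₂ - y'₁ᵀ * v'⁻¹ * y'₁).det) :
    trace (fromBlocks N₂ ((1/2 : ℝ) • R₂) ((1/2 : ℝ) • R₂ᵀ) M *
        (fromBlocks v₂ y₂ y₂ᵀ T - (fromCols y'₁ y'₂)ᵀ * v'⁻¹ * fromCols y'₁ y'₂)) -
      trace (M * (T - (fromRows y'₂ y₂)ᵀ * (fromBlocks v' y'₁ y'₁ᵀ v₂)⁻¹ * fromRows y'₂ y₂)) =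
    trace (fromBlocks N₂ ((1/2 : ℝ) • R₂) ((1/2 : ℝ) • R₂ᵀ) M *
      fromBlocks (v₂ - y'₁ᵀ * v'⁻¹ * y'₁) (y₂ - y'₁ᵀ * v'⁻¹ * y'₂)
        (y₂ - y'₁ᵀ * v'⁻¹ * y'₂)ᵀ
        ((y₂ - y'₁ᵀ * v'⁻¹ * y'₂)ᵀ * (v₂ - y'₁ᵀ * v'⁻¹ * y'₁)⁻¹ *
          (y₂ - y'₁ᵀ * v'⁻¹ * y'₂))) := by
  have hsymm : (v'⁻¹)ᵀ = v'⁻¹ := by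
    rw [transpose_nonsing_inv, ← conjTranspose_eq_transpose_of_trivial, hv'.isHermitian.eq]
  have hη : (y₂ - y'₁ᵀ * v'⁻¹ * y'₂)ᵀ = y₂ᵀ - y'₂ᵀ * v'⁻¹ * y'₁ := by
    simp only [transpose_sub, transpose_mul, transpose_transpose, hsymm, Matrix.mul_assoc]
  have hschur : (fromCols y'₁ y'₂)ᵀ * v'⁻¹ * fromCols y'₁ y'₂ =
      fromBlocks (y'₁ᵀ * v'⁻¹ * y'₁) (y'₁ᵀ * v'⁻¹ * y'₂) (y'₂ᵀ * v'⁻¹ * y'₁)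
        (y'₂ᵀ * v'⁻¹ * y'₂) := by
    rw [transpose_fromCols, fromRows_mul, fromRows_mul_fromCols]
  have hquad := fromCols_mul_inv_fromBlocks_mul_fromRows v' y'₁ y'₁ᵀ v₂ y'₂ᵀ y₂ᵀ y'₂ y₂
    (isUnit_iff_ne_zero.mpr hv'.det_pos.ne') hΔ
  rw [← transpose_fromRows, ← hη] at hquad
  rw [hschur, fromBlocks_sub, ← hη, hquad, sub_add_eq_sub_sub,
    trace_fromBlocks_mul_sub_trace_mul]

/-- the key trace identity in the proof of Lemma 2.1:
`Tr(N·(T' - y'ᵀ v'⁻¹ y')) - Tr(M·(T - yᵀ v⁻¹ y)) = Tr(N · [[Δ, η],[ηᵀ, ηᵀΔ⁻¹η]])`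
where `Δ = v₂ - y'₁ᵀ v'⁻¹ y'₁` and `η = y₂ - y'₁ᵀ v'⁻¹ y'₂`. -/
theorem trace_identity_fourierJacobi {m t r : ℕ}
    (v' : Matrix (Fin m) (Fin m) ℝ) (v₂ : Matrix (Fin t) (Fin t) ℝ)
    (T : Matrix (Fin r) (Fin r) ℝ) (y'₁ : Matrix (Fin m) (Fin t) ℝ)
    (y'₂ : Matrix (Fin m) (Fin r) ℝ) (y₂ : Matrix (Fin t) (Fin r) ℝ)
    (N₂ : Matrix (Fin t) (Fin t) ℝ) (R₂ : Matrix (Fin t) (Fin r) ℝ)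
    (M : Matrix (Fin r) (Fin r) ℝ)
    (hv' : v'.PosDef) (hv₂ : v₂.IsSymm) (hT : T.IsSymm) (hN₂ : N₂.IsSymm) (hM : M.IsSymm)
    (hΔ : IsUnit (v₂ - y'₁ᵀ * v'⁻¹ * y'₁).det)
    (hv : IsUnit (fromBlocks v' y'₁ y'₁ᵀ v₂).det) :
    trace (fromBlocks N₂ ((1/2 : ℝ) • R₂) ((1/2 : ℝ) • R₂ᵀ) M *
        (fromBlocks v₂ y₂ y₂ᵀ T - (fromCols y'₁ y'₂)ᵀ * v'⁻¹ * fromCols y'₁ y'₂)) -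
      trace (M * (T - (fromRows y'₂ y₂)ᵀ * (fromBlocks v' y'₁ y'₁ᵀ v₂)⁻¹ * fromRows y'₂ y₂)) =
    trace (fromBlocks N₂ ((1/2 : ℝ) • R₂) ((1/2 : ℝ) • R₂ᵀ) M *
      fromBlocks (v₂ - y'₁ᵀ * v'⁻¹ * y'₁) (y₂ - y'₁ᵀ * v'⁻¹ * y'₂)
        (y₂ - y'₁ᵀ * v'⁻¹ * y'₂)ᵀ
        ((y₂ - y'₁ᵀ * v'⁻¹ * y'₂)ᵀ * (v₂ - y'₁ᵀ * v'⁻¹ * y'₁)⁻¹ *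
          (y₂ - y'₁ᵀ * v'⁻¹ * y'₂))) :=
  trace_identity_fourierJacobi_general v' v₂ T y'₁ y'₂ y₂ N₂ R₂ M hv' hΔ
end

section
/- Let M ∈ L_r^+ and let N₁ = [[N₂₁, (1/2)R₂₁],[(1/2)R₂₁ᵀ, M]] and N₂ = [[N₂₂, (1/2)R₂₂],[(1/2)R₂₂ᵀ, M]] be two elements of L_{t,r}^+(M). Suppose that 4N₂₁ - R₂₁M⁻¹R₂₁ᵀ = 4N₂₂ - R₂₂M⁻¹R₂₂ᵀ and that R₂₂ - R₂₁ = X·(2M) for some integer t×r matrix X. Then, with γ := [[1_t, X],[0, 1_r]] ∈ B_{t,r}(ℤ), one has γ·N₁·γᵀ = N₂; in particular N₁ and N₂ lie in the same B_{t,r}(ℤ)-orbit. -/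
/-!
Conjugating `[[A, B], [C, D]]` by `γ = [[1, X], [0, 1]]` keeps `D`, replaces `B, C` by
`B + X D, C + D Xᵀ`, and leaves the Schur complement `A - B D⁻¹ C` unchanged. With
`B = R/2`, the hypothesis `R₂₂ - R₂₁ = 2 X M` makes the off-diagonal blocks of `γ N₁ γᵀ`
those of `N₂`, and `4 N₂ - R M⁻¹ Rᵀ` is four times the Schur complement, so the equal
invariants force the upper-left blocks to agree as well.
-/

open Matrix

/-- A real matrix has integer entries. -/
def IsIntegerMatrix {ι κ : Type*} (A : Matrix ι κ ℝ) : Prop :=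
  ∀ i j, ∃ z : ℤ, A i j = z

/-- A real square matrix is half-integral: integer diagonal and its double integral. -/
def IsHalfIntegral {ι : Type*} (A : Matrix ι ι ℝ) : Prop :=
  (∀ i, ∃ z : ℤ, A i i = z) ∧ ∀ i j, ∃ z : ℤ, 2 * A i j = z

/-- Membership in `L_t^+`: positive definite half-integral symmetric real matrices. -/
def LPlus {ι : Type*} [Fintype ι] (A : Matrix ι ι ℝ) : Prop :=
  A.IsSymm ∧ A.PosDef ∧ IsHalfIntegral A

/-- Membership in `L_{t,r}^+(M)`: positive definite half-integral matrices of the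
block form `[[N₂, (1/2)R₂],[(1/2)R₂ᵀ, M]]` with `N₂ ∈ L_t^+` and `R₂` integral. -/
def LtrPlus (t r : ℕ) (M : Matrix (Fin r) (Fin r) ℝ) :
    Set (Matrix (Fin t ⊕ Fin r) (Fin t ⊕ Fin r) ℝ) :=
  {N | ∃ N₂ : Matrix (Fin t) (Fin t) ℝ, ∃ R₂ : Matrix (Fin t) (Fin r) ℝ,
    LPlus N₂ ∧ IsIntegerMatrix R₂ ∧
    N = Matrix.fromBlocks N₂ ((1/2 : ℝ) • R₂) ((1/2 : ℝ) • R₂ᵀ) M ∧ LPlus N}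

/-- Membership in `B_{t,r}(ℤ)` (viewed inside real matrices): `γ = [[γ₁,γ₂],[0,1]]`
with `γ₁ ∈ GL_t(ℤ)` and `γ₂` an integer matrix. -/
def InBtr (t r : ℕ) (γ : Matrix (Fin t ⊕ Fin r) (Fin t ⊕ Fin r) ℝ) : Prop :=
  ∃ γ₁ : Matrix (Fin t) (Fin t) ℝ, ∃ γ₂ : Matrix (Fin t) (Fin r) ℝ,
    IsIntegerMatrix γ₁ ∧ (γ₁.det = 1 ∨ γ₁.det = -1) ∧ IsIntegerMatrix γ₂ ∧
    γ = Matrix.fromBlocks γ₁ γ₂ (0 : Matrix (Fin r) (Fin t) ℝ) (1 : Matrix (Fin r) (Fin r) ℝ)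

section UnipotentCongruence

variable {m n R : Type*} [Fintype n] [DecidableEq n] [CommRing R]

theorem fromBlocks_unipotent_mul_mul_transpose [Fintype m] [DecidableEq m]
    (A : Matrix m m R) (B : Matrix m n R) (C : Matrix n m R) (D : Matrix n n R) (X : Matrix m n R) :
    fromBlocks 1 X 0 1 * fromBlocks A B C D * (fromBlocks 1 X 0 1)ᵀ =
      fromBlocks (A + X * C + B * Xᵀ + X * D * Xᵀ) (B + X * D) (C + D * Xᵀ) D := by
  simp only [fromBlocks_transpose, fromBlocks_multiply, transpose_one, transpose_zero,
    Matrix.one_mul, Matrix.mul_one, Matrix.zero_mul, Matrix.mul_zero, zero_add,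
    Matrix.add_mul, Matrix.mul_assoc]
  congr 1
  abel

theorem add_mul_mul_inv_mul_add {D : Matrix n n R} (hD : IsUnit D.det) (B : Matrix m n R)
    (C : Matrix n m R) (X : Matrix m n R) :
    (B + X * D) * D⁻¹ * (C + D * Xᵀ) = B * D⁻¹ * C + X * C + B * Xᵀ + X * D * Xᵀ := by
  rw [Matrix.add_mul, Matrix.mul_nonsing_inv_cancel_right _ _ hD, Matrix.mul_add,
    Matrix.add_mul, Matrix.add_mul, Matrix.mul_assoc B D⁻¹ (D * Xᵀ),
    Matrix.nonsing_inv_mul_cancel_left _ _ hD, Matrix.mul_assoc X D]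
  abel

theorem fromBlocks_unipotent_congr_eq_of_schur_eq [Fintype m] [DecidableEq m]
    {A A' : Matrix m m R} {B B' : Matrix m n R} {C C' : Matrix n m R} {D : Matrix n n R}
    {X : Matrix m n R} (hD : IsUnit D.det) (hB : B' = B + X * D) (hC : C' = C + D * Xᵀ)
    (hschur : A' - B' * D⁻¹ * C' = A - B * D⁻¹ * C) :
    fromBlocks 1 X 0 1 * fromBlocks A B C D * (fromBlocks 1 X 0 1)ᵀ =
      fromBlocks A' B' C' D := by
  rw [fromBlocks_unipotent_mul_mul_transpose, hB, hC]
  rw [hB, hC, add_mul_mul_inv_mul_add hD] at hschur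
  congr 1
  linear_combination (norm := module) -hschur

end UnipotentCongruence

theorem isIntegerMatrix_one {ι : Type*} [DecidableEq ι] : IsIntegerMatrix (1 : Matrix ι ι ℝ) :=
  fun i j => ⟨(1 : Matrix ι ι ℤ) i j, by rw [one_apply, one_apply]; split_ifs <;> simp⟩

theorem inBtr_fromBlocks_one_of_isIntegerMatrix {t r : ℕ} {X : Matrix (Fin t) (Fin r) ℝ}
    (hX : IsIntegerMatrix X) : InBtr t r (fromBlocks 1 X 0 1) :=
  ⟨1, X, isIntegerMatrix_one, Or.inl det_one, hX, rfl⟩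

theorem half_smul_mul_mul_half_smul {m n : Type*} [Fintype n] (R : Matrix m n ℝ)
    (P : Matrix n n ℝ) : ((1/2 : ℝ) • R) * P * ((1/2 : ℝ) • Rᵀ) = (1/4 : ℝ) • (R * P * Rᵀ) := by
  rw [Matrix.smul_mul, Matrix.smul_mul, Matrix.mul_smul, smul_smul]
  norm_num

theorem same_orbit_of_same_invariant_general {t r : ℕ}
    (M : Matrix (Fin r) (Fin r) ℝ) (hM : LPlus M)
    (N₂₁ N₂₂ : Matrix (Fin t) (Fin t) ℝ) (R₂₁ R₂₂ : Matrix (Fin t) (Fin r) ℝ)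
    (hschur : (4 : ℝ) • N₂₁ - R₂₁ * M⁻¹ * R₂₁ᵀ = (4 : ℝ) • N₂₂ - R₂₂ * M⁻¹ * R₂₂ᵀ)
    (X : Matrix (Fin t) (Fin r) ℝ) (hX : IsIntegerMatrix X)
    (hXR : R₂₂ - R₂₁ = X * ((2 : ℝ) • M)) :
    InBtr t r (fromBlocks (1 : Matrix (Fin t) (Fin t) ℝ) X
        (0 : Matrix (Fin r) (Fin t) ℝ) (1 : Matrix (Fin r) (Fin r) ℝ)) ∧
    fromBlocks (1 : Matrix (Fin t) (Fin t) ℝ) X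
          (0 : Matrix (Fin r) (Fin t) ℝ) (1 : Matrix (Fin r) (Fin r) ℝ) *
        fromBlocks N₂₁ ((1/2 : ℝ) • R₂₁) ((1/2 : ℝ) • R₂₁ᵀ) M *
        (fromBlocks (1 : Matrix (Fin t) (Fin t) ℝ) X
          (0 : Matrix (Fin r) (Fin t) ℝ) (1 : Matrix (Fin r) (Fin r) ℝ))ᵀ =
      fromBlocks N₂₂ ((1/2 : ℝ) • R₂₂) ((1/2 : ℝ) • R₂₂ᵀ) M := by
  have hMs : Mᵀ = M := hM.1
  have hMdet : IsUnit M.det := isUnit_iff_ne_zero.2 hM.2.1.det_pos.ne'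
  have hB : (1/2 : ℝ) • R₂₂ = (1/2 : ℝ) • R₂₁ + X * M := by
    rw [← sub_eq_iff_eq_add', ← smul_sub, hXR, Matrix.mul_smul, smul_smul]
    norm_num
  have hC : (1/2 : ℝ) • R₂₂ᵀ = (1/2 : ℝ) • R₂₁ᵀ + M * Xᵀ := by
    simpa [transpose_mul, hMs] using congrArg transpose hB
  refine ⟨inBtr_fromBlocks_one_of_isIntegerMatrix hX,
    fromBlocks_unipotent_congr_eq_of_schur_eq hMdet hB hC ?_⟩
  rw [half_smul_mul_mul_half_smul, half_smul_mul_mul_half_smul]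
  linear_combination (norm := module) (-(1/4 : ℝ)) • hschur

/-- two elements of `L_{t,r}^+(M)` with the same Schur invariant and
congruent right columns lie in the same `B_{t,r}(ℤ)`-orbit, via `γ = [[1,X],[0,1]]`. -/
theorem same_orbit_of_same_invariant {t r : ℕ}
    (M : Matrix (Fin r) (Fin r) ℝ) (hM : LPlus M)
    (N₂₁ N₂₂ : Matrix (Fin t) (Fin t) ℝ) (R₂₁ R₂₂ : Matrix (Fin t) (Fin r) ℝ)
    (h1 : fromBlocks N₂₁ ((1/2 : ℝ) • R₂₁) ((1/2 : ℝ) • R₂₁ᵀ) M ∈ LtrPlus t r M)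
    (h2 : fromBlocks N₂₂ ((1/2 : ℝ) • R₂₂) ((1/2 : ℝ) • R₂₂ᵀ) M ∈ LtrPlus t r M)
    (hN21 : LPlus N₂₁) (hN22 : LPlus N₂₂)
    (hR21 : IsIntegerMatrix R₂₁) (hR22 : IsIntegerMatrix R₂₂)
    (hschur : (4 : ℝ) • N₂₁ - R₂₁ * M⁻¹ * R₂₁ᵀ = (4 : ℝ) • N₂₂ - R₂₂ * M⁻¹ * R₂₂ᵀ)
    (X : Matrix (Fin t) (Fin r) ℝ) (hX : IsIntegerMatrix X)
    (hXR : R₂₂ - R₂₁ = X * ((2 : ℝ) • M)) :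
    InBtr t r (fromBlocks (1 : Matrix (Fin t) (Fin t) ℝ) X
        (0 : Matrix (Fin r) (Fin t) ℝ) (1 : Matrix (Fin r) (Fin r) ℝ)) ∧
    fromBlocks (1 : Matrix (Fin t) (Fin t) ℝ) X
          (0 : Matrix (Fin r) (Fin t) ℝ) (1 : Matrix (Fin r) (Fin r) ℝ) *
        fromBlocks N₂₁ ((1/2 : ℝ) • R₂₁) ((1/2 : ℝ) • R₂₁ᵀ) M *
        (fromBlocks (1 : Matrix (Fin t) (Fin t) ℝ) X
          (0 : Matrix (Fin r) (Fin t) ℝ) (1 : Matrix (Fin r) (Fin r) ℝ))ᵀ =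
      fromBlocks N₂₂ ((1/2 : ℝ) • R₂₂) ((1/2 : ℝ) • R₂₂ᵀ) M :=
  same_orbit_of_same_invariant_general M hM N₂₁ N₂₂ R₂₁ R₂₂ hschur X hX hXR
end

section
/- Let t, r ≥ 0 with t ≥ 1 and let M ∈ L_r^+. There exists a real number s₀ such that for every real s ≥ s₀ and every subset S of L_{t,r}^+(M) containing at most one element from each B_{t,r}(ℤ)-orbit (i.e., such that for distinct N, N' ∈ S there is no γ ∈ B_{t,r}(ℤ) with γNγᵀ = N'), the family (det N)^{-s}, N ∈ S, is summable. -/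
open Matrix

/-!
Write `N = [[N₂, P], [Pᵀ, M]]` with `P = R₂ / 2`. The Schur complement `N₁ = N₂ - P M⁻¹ Pᵀ` is
positive definite, `det N = det M · det N₁`, and `k • N₁` is an integer matrix for
`k = 2 det (2M)`. Hermite's inequality gives `u ∈ GL_t(ℤ)` with
`∏ᵢ (u N₁ uᵀ)ᵢᵢ ≤ (4/3)^(t choose 2) det N₁`; as every diagonal entry of `u N₁ uᵀ` is at least
`1/k`, all its entries are `O(det N)`. Choosing the integer matrix `w` so that `u P M⁻¹ + w` has
entries in `[-1/2, 1/2]`, the element `γ = [[u, w], [0, 1]]` of `B_{t,r}(ℤ)` moves `N` to a matrix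
all of whose entries are `O(det N)`. Distinct orbit representatives thus give distinct integer
points `2 γ N γᵀ` of norm `O(det N)` in `ℤ^((t+r)²)`, and the series is dominated by the lattice
sum `∑ ‖z‖^(-s)`, which converges for `s > (t+r)²`.
-/

namespace IsIntegerMatrix

variable {ι κ μ : Type*}

lemma map_intCast (Z : Matrix ι κ ℤ) : IsIntegerMatrix (Z.map ((↑) : ℤ → ℝ)) :=
  fun i j => ⟨Z i j, rfl⟩

lemma exists_map_eq {A : Matrix ι κ ℝ} (hA : IsIntegerMatrix A) :
    ∃ Z : Matrix ι κ ℤ, Z.map (↑) = A :=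
  ⟨.of fun i j => (hA i j).choose, Matrix.ext fun i j => (hA i j).choose_spec.symm⟩

lemma zero : IsIntegerMatrix (0 : Matrix ι κ ℝ) :=
  fun _ _ => ⟨0, by simp⟩

lemma one [DecidableEq ι] : IsIntegerMatrix (1 : Matrix ι ι ℝ) := by
  simpa using map_intCast (1 : Matrix ι ι ℤ)

lemma mul [Fintype κ] {A : Matrix ι κ ℝ} {B : Matrix κ μ ℝ} (hA : IsIntegerMatrix A)
    (hB : IsIntegerMatrix B) : IsIntegerMatrix (A * B) := by
  obtain ⟨Z, rfl⟩ := hA.exists_map_eq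
  obtain ⟨Z', rfl⟩ := hB.exists_map_eq
  have h : (Z * Z').map ((↑) : ℤ → ℝ) = Z.map (↑) * Z'.map (↑) :=
    Matrix.map_mul (f := Int.castRingHom ℝ)
  exact h ▸ map_intCast _

lemma add {A B : Matrix ι κ ℝ} (hA : IsIntegerMatrix A) (hB : IsIntegerMatrix B) :
    IsIntegerMatrix (A + B) := fun i j => by
  obtain ⟨a, ha⟩ := hA i j
  obtain ⟨b, hb⟩ := hB i j
  exact ⟨a + b, by simp [ha, hb]⟩

lemma neg {A : Matrix ι κ ℝ} (hA : IsIntegerMatrix A) : IsIntegerMatrix (-A) := fun i j => by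
  obtain ⟨a, ha⟩ := hA i j
  exact ⟨-a, by simp [ha]⟩

lemma sub {A B : Matrix ι κ ℝ} (hA : IsIntegerMatrix A) (hB : IsIntegerMatrix B) :
    IsIntegerMatrix (A - B) := sub_eq_add_neg A B ▸ hA.add hB.neg

lemma transpose {A : Matrix ι κ ℝ} (hA : IsIntegerMatrix A) : IsIntegerMatrix Aᵀ :=
  fun i j => hA j i

lemma intCast_smul (z : ℤ) {A : Matrix ι κ ℝ} (hA : IsIntegerMatrix A) :
    IsIntegerMatrix ((z : ℝ) • A) := fun i j => by
  obtain ⟨a, ha⟩ := hA i j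
  exact ⟨z * a, by simp [ha]⟩

lemma fromBlocks {A : Matrix ι ι ℝ} {B : Matrix ι κ ℝ} {C : Matrix κ ι ℝ} {D : Matrix κ κ ℝ}
    (hA : IsIntegerMatrix A) (hB : IsIntegerMatrix B) (hC : IsIntegerMatrix C)
    (hD : IsIntegerMatrix D) : IsIntegerMatrix (Matrix.fromBlocks A B C D)
  | .inl i, .inl j => hA i j
  | .inl i, .inr j => hB i j
  | .inr i, .inl j => hC i j
  | .inr i, .inr j => hD i j

variable [Fintype ι] [DecidableEq ι] {A : Matrix ι ι ℝ}

lemma exists_det_eq (hA : IsIntegerMatrix A) : ∃ z : ℤ, A.det = z := by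
  obtain ⟨Z, rfl⟩ := hA.exists_map_eq
  exact ⟨Z.det, (Int.cast_det Z).symm⟩

lemma adjugate (hA : IsIntegerMatrix A) : IsIntegerMatrix A.adjugate := by
  obtain ⟨Z, rfl⟩ := hA.exists_map_eq
  have h : Z.adjugate.map ((↑) : ℤ → ℝ) = (Z.map (↑)).adjugate :=
    (Int.castRingHom ℝ).map_adjugate Z
  exact h ▸ map_intCast _

lemma inv (hA : IsIntegerMatrix A) (hdet : A.det = 1 ∨ A.det = -1) : IsIntegerMatrix A⁻¹ := by
  rw [inv_def]
  rcases hdet with h | h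
  · simpa [h] using hA.adjugate
  · simpa [h] using hA.adjugate.intCast_smul (-1)

end IsIntegerMatrix

lemma IsHalfIntegral.isIntegerMatrix_two_smul {ι : Type*} {A : Matrix ι ι ℝ}
    (hA : IsHalfIntegral A) : IsIntegerMatrix ((2 : ℝ) • A) := fun i j => by
  obtain ⟨z, hz⟩ := hA.2 i j
  exact ⟨z, by simp [hz]⟩

lemma IsHalfIntegral.isIntegerMatrix_smul_schur {ι κ : Type*} [Fintype κ] [DecidableEq κ]
    {N₂ : Matrix ι ι ℝ} {R₂ : Matrix ι κ ℝ} {M : Matrix κ κ ℝ} (hN₂ : IsHalfIntegral N₂)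
    (hR₂ : IsIntegerMatrix R₂) (hM : IsHalfIntegral M) (hMdet : M.det ≠ 0) :
    IsIntegerMatrix ((2 * ((2 : ℝ) • M).det) •
      (N₂ - ((1 / 2 : ℝ) • R₂) * M⁻¹ * ((1 / 2 : ℝ) • R₂)ᵀ)) := by
  obtain ⟨d, hd⟩ := hM.isIntegerMatrix_two_smul.exists_det_eq
  have hd0 : (d : ℝ) ≠ 0 := by
    rw [← hd, det_smul]; exact mul_ne_zero (by positivity) hMdet
  have hadj : (d : ℝ) • ((2 : ℝ) • M)⁻¹ = ((2 : ℝ) • M).adjugate := by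
    rw [inv_def, smul_smul, hd, Ring.inverse_eq_inv', mul_inv_cancel₀ hd0, one_smul]
  have hMinv : M⁻¹ = (2 : ℝ) • ((2 : ℝ) • M)⁻¹ := by
    rw [inv_smul _ _ (isUnit_iff_ne_zero.mpr hMdet), smul_smul]
    norm_num
  have hsplit : (2 * ((2 : ℝ) • M).det) • (N₂ - ((1 / 2 : ℝ) • R₂) * M⁻¹ * ((1 / 2 : ℝ) • R₂)ᵀ) =
      (d : ℝ) • ((2 : ℝ) • N₂) - R₂ * ((2 : ℝ) • M).adjugate * R₂ᵀ := by
    rw [hd, hMinv, ← hadj]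
    simp only [transpose_smul, Matrix.smul_mul, Matrix.mul_smul, smul_sub]
    module
  rw [hsplit]
  exact (hN₂.isIntegerMatrix_two_smul.intCast_smul d).sub
    ((hR₂.mul hM.isIntegerMatrix_two_smul.adjugate).mul hR₂.transpose)

lemma LPlus.one_le_two_pow_mul_det {ι : Type*} [Fintype ι] [DecidableEq ι] {N : Matrix ι ι ℝ}
    (hN : LPlus N) : 1 ≤ 2 ^ Fintype.card ι * N.det := by
  obtain ⟨z, hz⟩ := hN.2.2.isIntegerMatrix_two_smul.exists_det_eq
  have hpos : (0 : ℝ) < z := by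
    rw [← hz, det_smul]
    exact mul_pos (by positivity) hN.2.1.det_pos
  rw [← det_smul, hz]
  exact Int.cast_one_le_of_pos (by exact_mod_cast hpos)

section Unimodular

variable {ι : Type*} [Fintype ι] [DecidableEq ι] {U : Matrix ι ι ℤ}

lemma isUnit_det_map_intCast (hU : IsUnit U.det) : IsUnit (U.map ((↑) : ℤ → ℝ)).det := by
  simpa [Int.cast_det] using hU.map (Int.castRingHom ℝ)

lemma det_map_intCast_mul_mul_transpose (hU : IsUnit U.det) (A : Matrix ι ι ℝ) :
    (U.map ((↑) : ℤ → ℝ) * A * (U.map ((↑) : ℤ → ℝ))ᵀ).det = A.det := by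
  have h : (U.det : ℝ) * U.det = 1 := by exact_mod_cast Int.isUnit_mul_self hU
  rw [det_mul, det_mul, det_transpose, ← Int.cast_det]
  linear_combination A.det * h

end Unimodular

lemma map_intCast_mul_mul_transpose {ι : Type*} [Fintype ι] (G W : Matrix ι ι ℤ)
    (A : Matrix ι ι ℝ) :
    (G * W).map ((↑) : ℤ → ℝ) * A * ((G * W).map ((↑) : ℤ → ℝ))ᵀ =
      G.map ((↑) : ℤ → ℝ) * (W.map ((↑) : ℤ → ℝ) * A * (W.map ((↑) : ℤ → ℝ))ᵀ) *
        (G.map ((↑) : ℤ → ℝ))ᵀ := by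
  simp only [map_mul_intCast, transpose_mul, Matrix.mul_assoc]

namespace Matrix

variable {ι κ : Type*} [Fintype ι]

lemma PosSemidef.two_mul_abs_apply_le [DecidableEq ι] {A : Matrix ι ι ℝ} (hA : A.PosSemidef)
    (i j : ι) : 2 * |A i j| ≤ A i i + A j j := by
  have hsymm : A j i = A i j := by simpa using hA.1.apply i j
  have hquad (c : ℝ) : 0 ≤ A i i + c * A i j + c * (A j i + c * A j j) := by
    have h := hA.dotProduct_mulVec_nonneg (Pi.single i 1 + Pi.single j c)
    simp only [star_trivial, add_dotProduct, mulVec_add, mulVec_single, single_dotProduct] at h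
    simpa using h
  rcases abs_cases (A i j) with ⟨h, -⟩ | ⟨h, -⟩ <;> rw [h] <;> nlinarith [hquad 1, hquad (-1)]

lemma mul_mul_transpose_apply_self (W : Matrix κ ι ℝ) (A : Matrix ι ι ℝ) (p : κ) :
    (W * A * Wᵀ) p p = W p ⬝ᵥ A *ᵥ W p := by
  rw [mul_apply, dotProduct_mulVec]
  simp [vecMul, mul_apply, dotProduct, Finset.sum_mul]

lemma IsSymm.eq_fromBlocks {m n : Type*} {A : Matrix (m ⊕ n) (m ⊕ n) ℝ} (hA : A.IsSymm) :
    A = Matrix.fromBlocks A.toBlocks₁₁ A.toBlocks₁₂ A.toBlocks₁₂ᵀ A.toBlocks₂₂ := by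
  conv_lhs => rw [← fromBlocks_toBlocks A]
  congr
  ext i j
  exact hA.apply (.inl j) (.inr i)

variable [DecidableEq ι]

lemma PosDef.mul_mul_transpose_of_isUnit_det {A W : Matrix ι ι ℝ} (hA : A.PosDef)
    (hW : IsUnit W.det) : (W * A * Wᵀ).PosDef := by
  simpa using hA.mul_mul_conjTranspose_same (vecMul_injective_iff_isUnit.mpr
    ((isUnit_iff_isUnit_det W).mpr hW))

variable [Fintype κ] [DecidableEq κ]

lemma PosDef.fromBlocks_schur₂₂ {A : Matrix ι ι ℝ} {B : Matrix ι κ ℝ} {D : Matrix κ κ ℝ}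
    (h : (fromBlocks A B Bᵀ D).PosDef) : (A - B * D⁻¹ * Bᵀ).PosDef := by
  have hD : D.PosDef := h.submatrix Sum.inr_injective
  have := hD.isUnit.invertible
  have hS : (A - B * D⁻¹ * Bᵀ).PosSemidef := by
    simpa using (PosDef.fromBlocks₂₂ A B hD).mp (by simpa using h.posSemidef)
  rw [hS.posDef_iff_det_ne_zero]
  have := h.det_pos.ne'
  rw [det_fromBlocks₂₂, invOf_eq_nonsing_inv] at this
  exact right_ne_zero_of_mul this

lemma det_fromBlocks_transpose₂₂ {A : Matrix ι ι ℝ} {B : Matrix ι κ ℝ} {D : Matrix κ κ ℝ}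
    (hD : IsUnit D.det) : (fromBlocks A B Bᵀ D).det = D.det * (A - B * D⁻¹ * Bᵀ).det := by
  have := D.invertibleOfIsUnitDet hD
  rw [det_fromBlocks₂₂, invOf_eq_nonsing_inv]

lemma fromBlocks_conj_eq {m r : Type*} [Fintype m] [Fintype r] [DecidableEq m] [DecidableEq r]
    (u : Matrix m m ℝ) (w X : Matrix m r ℝ) (A : Matrix m m ℝ) (P : Matrix m r ℝ)
    {D : Matrix r r ℝ} (hD : IsUnit D.det) (hDT : Dᵀ = D) (hX : X * D = u * P + w * D) :
    fromBlocks u w 0 1 * fromBlocks A P Pᵀ D * (fromBlocks u w 0 1)ᵀ =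
      fromBlocks (u * (A - P * D⁻¹ * Pᵀ) * uᵀ + X * D * Xᵀ) (X * D) (X * D)ᵀ D := by
  have hXDX : X * D * Xᵀ = (X * D) * D⁻¹ * (X * D)ᵀ := by
    rw [transpose_mul, hDT, Matrix.mul_assoc (X * D), ← Matrix.mul_assoc D⁻¹,
      nonsing_inv_mul D hD, Matrix.one_mul]
  have hDD (Y : Matrix r m ℝ) : D * (D⁻¹ * Y) = Y := by
    rw [← Matrix.mul_assoc, mul_nonsing_inv D hD, Matrix.one_mul]
  have hDD' (Y : Matrix r m ℝ) : D⁻¹ * (D * Y) = Y := by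
    rw [← Matrix.mul_assoc, nonsing_inv_mul D hD, Matrix.one_mul]
  rw [hXDX, hX, fromBlocks_transpose, fromBlocks_multiply, fromBlocks_multiply]
  simp only [transpose_add, transpose_mul, hDT, Matrix.mul_zero, Matrix.zero_mul,
    Matrix.mul_one, Matrix.one_mul, zero_add, transpose_zero, transpose_one]
  congr 1
  simp only [Matrix.add_mul, Matrix.mul_add, Matrix.sub_mul, Matrix.mul_sub, Matrix.mul_assoc,
    hDD, hDD']
  abel

end Matrix

section MinimalVectors

variable {ι : Type*} [Fintype ι]

lemma Matrix.PosDef.exists_pos_mul_sq_norm_le {A : Matrix ι ι ℝ} (hA : A.PosDef) :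
    ∃ ε > 0, ∀ v : ι → ℝ, ε * ‖v‖ ^ 2 ≤ v ⬝ᵥ A *ᵥ v := by
  cases isEmpty_or_nonempty ι
  · exact ⟨1, one_pos, fun v => by simp [Subsingleton.elim v 0]⟩
  have hne : (Metric.sphere (0 : ι → ℝ) 1).Nonempty := ⟨fun _ => 1, by simp⟩
  obtain ⟨u, hu, hmin⟩ := (isCompact_sphere (0 : ι → ℝ) 1).exists_isMinOn hne
    (by fun_prop : Continuous fun v : ι → ℝ => v ⬝ᵥ A *ᵥ v).continuousOn
  have hu0 : u ≠ 0 := ne_zero_of_mem_unit_sphere ⟨u, hu⟩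
  refine ⟨u ⬝ᵥ A *ᵥ u, by simpa using hA.dotProduct_mulVec_pos hu0, fun v => ?_⟩
  rcases eq_or_ne v 0 with rfl | hv
  · simp
  have hv' : 0 < ‖v‖ := norm_pos_iff.mpr hv
  have hsph : ‖v‖⁻¹ • v ∈ Metric.sphere (0 : ι → ℝ) 1 := by
    simp [norm_smul, hv'.ne']
  have hv_eq : v = ‖v‖ • (‖v‖⁻¹ • v) := by rw [smul_smul, mul_inv_cancel₀ hv'.ne', one_smul]
  calc u ⬝ᵥ A *ᵥ u * ‖v‖ ^ 2 ≤ (‖v‖⁻¹ • v) ⬝ᵥ A *ᵥ (‖v‖⁻¹ • v) * ‖v‖ ^ 2 := by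
        gcongr; exact hmin hsph
    _ = v ⬝ᵥ A *ᵥ v := by
        conv_rhs => rw [hv_eq]
        simp only [mulVec_smul, dotProduct_smul, smul_dotProduct, smul_eq_mul]
        ring

lemma norm_intCast_comp (z : ι → ℤ) : ‖(Int.cast ∘ z : ι → ℝ)‖ = ‖z‖ := by
  simp only [Pi.norm_def, Function.comp_apply]
  congr 2

lemma Matrix.PosDef.finite_setOf_le {A : Matrix ι ι ℝ} (hA : A.PosDef) (c : ℝ) :
    {z : ι → ℤ | (Int.cast ∘ z) ⬝ᵥ A *ᵥ (Int.cast ∘ z) ≤ c}.Finite := by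
  obtain ⟨ε, hε, hA'⟩ := hA.exists_pos_mul_sq_norm_le
  refine (isCompact_closedBall (0 : ι → ℤ) √(c / ε)).finite_of_discrete.subset fun z hz => ?_
  rw [mem_closedBall_zero_iff, ← norm_intCast_comp]
  refine Real.le_sqrt_of_sq_le ?_
  rw [le_div_iff₀' hε]
  exact (hA' _).trans hz

def Matrix.IsMinimalVector (A : Matrix ι ι ℝ) (x : ι → ℤ) : Prop :=
  x ≠ 0 ∧ ∀ z : ι → ℤ, z ≠ 0 →
    (Int.cast ∘ x) ⬝ᵥ A *ᵥ (Int.cast ∘ x) ≤ (Int.cast ∘ z) ⬝ᵥ A *ᵥ (Int.cast ∘ z)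

lemma Matrix.PosDef.exists_isMinimalVector [DecidableEq ι] [Nonempty ι] {A : Matrix ι ι ℝ}
    (hA : A.PosDef) : ∃ x, A.IsMinimalVector x := by
  set Q : (ι → ℤ) → ℝ := fun z => (Int.cast ∘ z) ⬝ᵥ A *ᵥ (Int.cast ∘ z)
  obtain ⟨i⟩ := ‹Nonempty ι›
  have he : (Pi.single i 1 : ι → ℤ) ≠ 0 := by simp
  obtain ⟨x, ⟨hx0, -⟩, hx⟩ := Set.exists_min_image {z | z ≠ 0 ∧ Q z ≤ Q (Pi.single i 1)} Q
    ((hA.finite_setOf_le _).subset fun z hz => hz.2) ⟨_, he, le_rfl⟩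
  refine ⟨x, hx0, fun z hz => ?_⟩
  rcases le_total (Q z) (Q (Pi.single i 1)) with h | h
  · exact hx z ⟨hz, h⟩
  · exact (hx _ ⟨he, le_rfl⟩).trans h

lemma Matrix.PosDef.intCast_comp_pos {A : Matrix ι ι ℝ} (hA : A.PosDef) {z : ι → ℤ} (hz : z ≠ 0) :
    0 < (Int.cast ∘ z) ⬝ᵥ A *ᵥ (Int.cast ∘ z) := by
  simpa using hA.dotProduct_mulVec_pos (x := Int.cast ∘ z) fun h => hz (funext fun i => by
    simpa using congrFun h i)

/-- A minimal vector is primitive: were it `d • y`, then `y` would be shorter unless `d = ±1`. -/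
lemma Matrix.IsMinimalVector.exists_dotProduct_eq_one {A : Matrix ι ι ℝ} {x : ι → ℤ}
    (hx : A.IsMinimalVector x) (hA : A.PosDef) : ∃ c : ι → ℤ, c ⬝ᵥ x = 1 := by
  obtain ⟨d, hd⟩ := Submodule.IsPrincipal.principal (Ideal.span (Set.range x))
  have hdvd (i : ι) : ∃ a : ℤ, a • d = x i := by
    rw [← Submodule.mem_span_singleton, ← hd]
    exact Ideal.subset_span (Set.mem_range_self i)
  choose y hy using hdvd
  have hy0 : y ≠ 0 := by
    rintro rfl
    exact hx.1 (funext fun i => by simp [← hy i])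
  have hQ : (Int.cast ∘ x : ι → ℝ) ⬝ᵥ A *ᵥ (Int.cast ∘ x)
      = (d : ℝ) ^ 2 * ((Int.cast ∘ y) ⬝ᵥ A *ᵥ (Int.cast ∘ y)) := by
    have : (Int.cast ∘ x : ι → ℝ) = (d : ℝ) • (Int.cast ∘ y) := funext fun i => by
      simp [← hy i, mul_comm]
    rw [this, mulVec_smul, dotProduct_smul, smul_dotProduct, smul_eq_mul, smul_eq_mul]
    ring
  have hd1 : IsUnit d := by
    have := hA.intCast_comp_pos hy0
    have : (d : ℝ) ^ 2 ≤ 1 := by nlinarith [hx.2 y hy0]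
    have : d ^ 2 ≤ 1 := by exact_mod_cast this
    have : d ≠ 0 := by rintro rfl; exact hx.1 (funext fun i => by simp [← hy i])
    rw [Int.isUnit_iff_abs_eq]
    nlinarith [abs_mul_abs_self d, abs_pos.mpr this]
  have htop : Ideal.span (Set.range x) = ⊤ := hd.trans (Ideal.span_singleton_eq_top.mpr hd1)
  obtain ⟨c, hc⟩ := Ideal.mem_span_range_iff_exists_fun.mp (htop ▸ Submodule.mem_top (x := 1))
  exact ⟨c, by simpa [dotProduct] using hc⟩

lemma Matrix.IsMinimalVector.le_mul_mul_transpose_apply_self [DecidableEq ι] {A : Matrix ι ι ℝ}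
    {x : ι → ℤ} (hx : A.IsMinimalVector x) {U : Matrix ι ι ℤ} (hU : IsUnit U.det) (p : ι) :
    (Int.cast ∘ x) ⬝ᵥ A *ᵥ (Int.cast ∘ x) ≤
      (U.map ((↑) : ℤ → ℝ) * A * (U.map ((↑) : ℤ → ℝ))ᵀ) p p := by
  rw [mul_mul_transpose_apply_self]
  exact hx.2 (U p) fun h => hU.ne_zero (det_eq_zero_of_row_eq_zero p fun j => congrFun h j)

end MinimalVectors

lemma exists_isUnit_det_row_eq {ι : Type*} [Fintype ι] [DecidableEq ι] {x : ι → ℤ}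
    (hx : ∃ c : ι → ℤ, c ⬝ᵥ x = 1) (i₀ : ι) :
    ∃ U : Matrix ι ι ℤ, IsUnit U.det ∧ U i₀ = x := by
  obtain ⟨c, hc⟩ := hx
  let f : (ι → ℤ) →ₗ[ℤ] ℤ :=
    { toFun := (c ⬝ᵥ ·), map_add' := dotProduct_add c,
      map_smul' := fun a v => dotProduct_smul a c v }
  have hfx : f x = 1 := hc
  obtain ⟨m, b⟩ := Submodule.basisOfPid (Pi.basisFun ℤ ι) (LinearMap.ker f)
  let B := Module.Basis.mkFinCons x b
    (fun a z hz h => by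
      have := congrArg f h
      rwa [map_add, map_smul, hfx, LinearMap.mem_ker.mp hz, map_zero, smul_eq_mul, mul_one,
        add_zero] at this)
    (fun z => ⟨-f z, by rw [LinearMap.mem_ker, map_add, map_smul, hfx, smul_eq_mul, mul_one,
      add_neg_cancel]⟩)
  let e₀ := B.indexEquiv (Pi.basisFun ℤ ι)
  let B' := B.reindex (e₀.trans (Equiv.swap (e₀ 0) i₀))
  refine ⟨.of fun i => B' i, ?_, ?_⟩
  · have hB' : (of fun i => B' i) = ((Pi.basisFun ℤ ι).toMatrix B')ᵀ := by
      ext i j; simp [Module.Basis.toMatrix_apply]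
    rw [hB', det_transpose, ← Module.Basis.det_apply]
    exact (Pi.basisFun ℤ ι).isUnit_det B'
  · show B' i₀ = x
    simp [B', B]

lemma exists_abs_add_intCast_le {m r : Type*} (Y : Matrix m r ℝ) :
    ∃ w : Matrix m r ℤ, ∀ i j, |(Y + w.map ((↑) : ℤ → ℝ)) i j| ≤ 1 / 2 :=
  ⟨Y.map fun y => -round y, fun i j => by simpa [← sub_eq_add_neg] using abs_sub_round (Y i j)⟩

lemma prod_le_four_thirds_pow_mul_prod {κ : Type*} [Fintype κ] {s x : κ → ℝ} {μ : ℝ} (hμ : 0 < μ)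
    (hx : ∀ i, |x i| ≤ 1 / 2) (h : ∀ i, μ ≤ s i + μ * x i ^ 2) :
    ∏ i, (s i + μ * x i ^ 2) ≤ (4 / 3) ^ Fintype.card κ * ∏ i, s i := by
  rw [← Finset.card_univ, ← Finset.prod_const, ← Finset.prod_mul_distrib]
  refine Finset.prod_le_prod (fun i _ => hμ.le.trans (h i)) fun i _ => ?_
  have hx2 : x i ^ 2 ≤ 1 / 4 := by nlinarith [sq_abs (x i), abs_nonneg (x i), hx i]
  nlinarith [h i, mul_le_mul_of_nonneg_left hx2 hμ.le]

/-- Hermite's induction step: size-reducing the lifted rows against the minimal corner entry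
`m 0 0` costs at most a factor `4/3` per row. -/
lemma exists_prod_diag_le_of_le_corner {κ : Type*} [Fintype κ] [DecidableEq κ]
    {D : Matrix κ κ ℝ} {β : Matrix κ (Fin 1) ℝ} {m : Matrix (Fin 1) (Fin 1) ℝ}
    (hB : (fromBlocks D β βᵀ m).PosDef)
    (hmin : ∀ G : Matrix (κ ⊕ Fin 1) (κ ⊕ Fin 1) ℤ, IsUnit G.det → ∀ p,
      m 0 0 ≤ (G.map ((↑) : ℤ → ℝ) * fromBlocks D β βᵀ m * (G.map ((↑) : ℤ → ℝ))ᵀ) p p)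
    {c : ℝ} (hred : ∀ S : Matrix κ κ ℝ, S.PosDef → ∃ V : Matrix κ κ ℤ, IsUnit V.det ∧
      ∏ i, (V.map ((↑) : ℤ → ℝ) * S * (V.map ((↑) : ℤ → ℝ))ᵀ) i i ≤ c * S.det) :
    ∃ G : Matrix (κ ⊕ Fin 1) (κ ⊕ Fin 1) ℤ, IsUnit G.det ∧
      ∏ p, (G.map ((↑) : ℤ → ℝ) * fromBlocks D β βᵀ m * (G.map ((↑) : ℤ → ℝ))ᵀ) p p
        ≤ (4 / 3 : ℝ) ^ Fintype.card κ * c * (fromBlocks D β βᵀ m).det := by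
  have hμ : 0 < m 0 0 := hB.diag_pos (i := .inr 0)
  have hm : IsUnit m.det := by simpa [det_fin_one] using hμ.ne'
  have hmT : mᵀ = m := by ext i j; simp [Subsingleton.elim i j]
  obtain ⟨V, hV, hVS⟩ := hred _ hB.fromBlocks_schur₂₂
  obtain ⟨g, hg⟩ := exists_abs_add_intCast_le (V.map ((↑) : ℤ → ℝ) * β * m⁻¹)
  set X := V.map ((↑) : ℤ → ℝ) * β * m⁻¹ + g.map ((↑) : ℤ → ℝ)
  have hX : X * m = V.map ((↑) : ℤ → ℝ) * β + g.map ((↑) : ℤ → ℝ) * m := by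
    rw [Matrix.add_mul, Matrix.mul_assoc _ m⁻¹, nonsing_inv_mul m hm, Matrix.mul_one]
  set T := V.map ((↑) : ℤ → ℝ) * (D - β * m⁻¹ * βᵀ) * (V.map ((↑) : ℤ → ℝ))ᵀ
  have hF : (fromBlocks V g 0 1).map ((↑) : ℤ → ℝ) * fromBlocks D β βᵀ m *
      ((fromBlocks V g 0 1).map ((↑) : ℤ → ℝ))ᵀ =
      fromBlocks (T + X * m * Xᵀ) (X * m) (X * m)ᵀ m := by
    rw [fromBlocks_map, ← fromBlocks_conj_eq _ _ X D β hm hmT hX]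
    simp
  have hG : IsUnit (fromBlocks V g 0 1).det := by
    rwa [det_fromBlocks_zero₂₁, det_one, mul_one]
  refine ⟨fromBlocks V g 0 1, hG, ?_⟩
  have hdiag (i : κ) : (T + X * m * Xᵀ) i i = T i i + m 0 0 * X i 0 ^ 2 := by
    simp [Matrix.mul_apply]; ring
  have hrow (i : κ) : m 0 0 ≤ T i i + m 0 0 * X i 0 ^ 2 := by
    simpa [hF, hdiag] using hmin _ hG (.inl i)
  rw [hF, Fintype.prod_sum_type, det_fromBlocks_transpose₂₂ hm, det_fin_one]
  simp only [fromBlocks_apply₁₁, fromBlocks_apply₂₂, Finset.univ_unique, Finset.prod_singleton,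
    hdiag]
  calc (∏ i, (T i i + m 0 0 * X i 0 ^ 2)) * m default default
      ≤ (4 / 3) ^ Fintype.card κ * (∏ i, T i i) * m 0 0 :=
        mul_le_mul_of_nonneg_right (prod_le_four_thirds_pow_mul_prod hμ (fun i => hg i 0) hrow)
          hμ.le
    _ ≤ (4 / 3) ^ Fintype.card κ * (c * (D - β * m⁻¹ * βᵀ).det) * m 0 0 := by
        gcongr
    _ = _ := by ring

lemma Matrix.PosDef.exists_isUnit_det_prod_diag_le_of_sum_fin_one {κ : Type*} [Fintype κ]
    [DecidableEq κ] {A : Matrix (κ ⊕ Fin 1) (κ ⊕ Fin 1) ℝ} (hA : A.PosDef) {c : ℝ}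
    (hred : ∀ S : Matrix κ κ ℝ, S.PosDef → ∃ V : Matrix κ κ ℤ, IsUnit V.det ∧
      ∏ i, (V.map ((↑) : ℤ → ℝ) * S * (V.map ((↑) : ℤ → ℝ))ᵀ) i i ≤ c * S.det) :
    ∃ U : Matrix (κ ⊕ Fin 1) (κ ⊕ Fin 1) ℤ, IsUnit U.det ∧
      ∏ p, (U.map ((↑) : ℤ → ℝ) * A * (U.map ((↑) : ℤ → ℝ))ᵀ) p p
        ≤ (4 / 3 : ℝ) ^ Fintype.card κ * c * A.det := by
  obtain ⟨x, hx⟩ := hA.exists_isMinimalVector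
  obtain ⟨W, hW, hWx⟩ := exists_isUnit_det_row_eq (hx.exists_dotProduct_eq_one hA) (.inr 0)
  have hB : (W.map ((↑) : ℤ → ℝ) * A * (W.map ((↑) : ℤ → ℝ))ᵀ).PosDef :=
    hA.mul_mul_transpose_of_isUnit_det (isUnit_det_map_intCast hW)
  obtain ⟨D, β, m, hDβm⟩ : ∃ D β m,
      W.map ((↑) : ℤ → ℝ) * A * (W.map ((↑) : ℤ → ℝ))ᵀ = fromBlocks D β βᵀ m :=
    ⟨_, _, _, (isHermitian_iff_isSymm.mp hB.isHermitian).eq_fromBlocks⟩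
  have hm : m 0 0 = (Int.cast ∘ x) ⬝ᵥ A *ᵥ (Int.cast ∘ x) := by
    have := mul_mul_transpose_apply_self (W.map ((↑) : ℤ → ℝ)) A (.inr 0)
    rw [hDβm] at this
    rw [← hWx]
    exact this
  obtain ⟨G, hG, hGB⟩ := exists_prod_diag_le_of_le_corner (hDβm ▸ hB)
    (fun G hG p => by
      rw [← hDβm, ← map_intCast_mul_mul_transpose, hm]
      exact hx.le_mul_mul_transpose_apply_self (by rw [det_mul]; exact hG.mul hW) p) hred
  refine ⟨G * W, by rw [det_mul]; exact hG.mul hW, ?_⟩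
  rwa [map_intCast_mul_mul_transpose, hDβm, ← det_map_intCast_mul_mul_transpose hW A, hDβm]

theorem Matrix.PosDef.exists_isUnit_det_prod_diag_le {ι : Type*} [Fintype ι] [DecidableEq ι]
    {A : Matrix ι ι ℝ} (hA : A.PosDef) : ∃ U : Matrix ι ι ℤ, IsUnit U.det ∧
      ∏ i, (U.map ((↑) : ℤ → ℝ) * A * (U.map ((↑) : ℤ → ℝ))ᵀ) i i
        ≤ (4 / 3 : ℝ) ^ (Fintype.card ι).choose 2 * A.det := by
  induction h : Fintype.card ι generalizing ι with
  | zero =>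
    have : IsEmpty ι := Fintype.card_eq_zero_iff.mp h
    exact ⟨1, by simp, by simp⟩
  | succ n ih =>
    obtain ⟨i₀⟩ : Nonempty ι := Fintype.card_pos_iff.mp (by omega)
    have hκ : Fintype.card {i // i ≠ i₀} = n := by simp [Fintype.card_subtype_compl, h]
    let e : ι ≃ {i // i ≠ i₀} ⊕ Fin 1 := Fintype.equivOfCardEq (by simp [h, hκ])
    obtain ⟨V, hV, hVA⟩ :=
      (hA.submatrix e.symm.injective).exists_isUnit_det_prod_diag_le_of_sum_fin_one
        fun S hS => ih hS hκ
    refine ⟨V.submatrix e e, by rwa [det_submatrix_equiv_self], ?_⟩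
    set F := V.map ((↑) : ℤ → ℝ) * A.submatrix e.symm e.symm * (V.map ((↑) : ℤ → ℝ))ᵀ
    have hconj : (V.submatrix e e).map ((↑) : ℤ → ℝ) * A * ((V.submatrix e e).map ((↑) : ℤ → ℝ))ᵀ
        = F.submatrix e e := by
      rw [← submatrix_mul_equiv _ _ _ e, ← submatrix_mul_equiv _ _ _ e]
      simp only [submatrix_submatrix, Equiv.symm_comp_self, submatrix_id_id]
      rfl
    rw [hconj]
    calc ∏ i, F.submatrix e e i i = ∏ p, F p p := e.prod_comp fun p => F p p
      _ ≤ _ := hVA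
      _ = _ := by
        rw [hκ, det_submatrix_equiv_self, Nat.choose_succ_succ', Nat.choose_one_right, pow_add]

lemma Matrix.PosDef.inv_le_apply_self {ι : Type*} [Fintype ι] [DecidableEq ι] {B : Matrix ι ι ℝ}
    (hB : B.PosDef) {k : ℝ} (hk : 0 < k) (hkB : IsIntegerMatrix (k • B)) (i : ι) :
    k⁻¹ ≤ B i i := by
  obtain ⟨z, hz⟩ := hkB i i
  have hpos : (0 : ℝ) < z := by
    rw [← hz, smul_apply, smul_eq_mul]
    exact mul_pos hk hB.diag_pos
  have : (1 : ℝ) ≤ z := Int.cast_one_le_of_pos (by exact_mod_cast hpos)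
  rw [← hz, smul_apply, smul_eq_mul] at this
  rwa [inv_le_iff_one_le_mul₀' hk]

lemma Matrix.PosDef.abs_apply_le_of_prod_diag_le {ι : Type*} [Fintype ι] [DecidableEq ι]
    {B : Matrix ι ι ℝ} (hB : B.PosDef) {δ P : ℝ} (hδ : 0 < δ) (hδB : ∀ i, δ ≤ B i i)
    (hP : ∏ i, B i i ≤ P) (i j : ι) : |B i j| ≤ P / δ ^ (Fintype.card ι - 1) := by
  have hdiag (i : ι) : B i i ≤ P / δ ^ (Fintype.card ι - 1) := by
    rw [le_div_iff₀ (by positivity)]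
    calc B i i * δ ^ (Fintype.card ι - 1)
        = B i i * ∏ _j ∈ Finset.univ.erase i, δ := by
          rw [Finset.prod_const, Finset.card_erase_of_mem (Finset.mem_univ i), Finset.card_univ]
      _ ≤ B i i * ∏ j ∈ Finset.univ.erase i, B j j := by
          gcongr with j
          · exact hB.diag_pos.le
          · exact hδB j
      _ = ∏ j, B j j := Finset.mul_prod_erase _ (fun j => B j j) (Finset.mem_univ i)
      _ ≤ P := hP
  linarith [hB.posSemidef.two_mul_abs_apply_le i j, hdiag i, hdiag j]

lemma Matrix.PosDef.exists_isUnit_det_abs_apply_le {ι : Type*} [Fintype ι] [DecidableEq ι]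
    {A : Matrix ι ι ℝ} (hA : A.PosDef) {k : ℝ} (hk : 0 < k) (hkA : IsIntegerMatrix (k • A)) :
    ∃ U : Matrix ι ι ℤ, IsUnit U.det ∧ ∀ i j,
      |(U.map ((↑) : ℤ → ℝ) * A * (U.map ((↑) : ℤ → ℝ))ᵀ) i j|
        ≤ (4 / 3 : ℝ) ^ (Fintype.card ι).choose 2 * k ^ (Fintype.card ι - 1) * A.det := by
  obtain ⟨U, hU, hprod⟩ := hA.exists_isUnit_det_prod_diag_le
  refine ⟨U, hU, fun i j => ?_⟩
  have hT := hA.mul_mul_transpose_of_isUnit_det (isUnit_det_map_intCast hU)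
  have hkT : IsIntegerMatrix (k • (U.map ((↑) : ℤ → ℝ) * A * (U.map ((↑) : ℤ → ℝ))ᵀ)) := by
    rw [← Matrix.smul_mul, ← Matrix.mul_smul]
    exact ((IsIntegerMatrix.map_intCast U).mul hkA).mul (IsIntegerMatrix.map_intCast U).transpose
  refine (hT.abs_apply_le_of_prod_diag_le (inv_pos.mpr hk) (hT.inv_le_apply_self hk hkT) hprod
    i j).trans_eq ?_
  rw [inv_pow, div_inv_eq_mul]
  ring

section BoxBounds

variable {m r : Type*} [Fintype r] {X : Matrix m r ℝ} (hX : ∀ i a, |X i a| ≤ 1) (M : Matrix r r ℝ)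
include hX

lemma abs_mul_apply_le_sum_abs (i : m) (b : r) : |(X * M) i b| ≤ ∑ a, |M a b| := by
  refine (Finset.abs_sum_le_sum_abs _ _).trans (Finset.sum_le_sum fun a _ => ?_)
  rw [abs_mul]
  exact mul_le_of_le_one_left (abs_nonneg _) (hX i a)

lemma abs_mul_mul_transpose_apply_le_sum_abs (i j : m) :
    |(X * M * Xᵀ) i j| ≤ ∑ a, ∑ b, |M a b| := by
  rw [Finset.sum_comm]
  refine (Finset.abs_sum_le_sum_abs _ _).trans (Finset.sum_le_sum fun b _ => ?_)
  rw [abs_mul]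
  exact mul_le_of_le_one_right (abs_nonneg _) (hX j b) |>.trans (abs_mul_apply_le_sum_abs hX M i b)

end BoxBounds

lemma sum_abs_apply_le_sum_sum_abs {r : Type*} [Fintype r] (M : Matrix r r ℝ) (b : r) :
    ∑ a, |M a b| ≤ ∑ a, ∑ b, |M a b| :=
  Finset.sum_le_sum fun a _ =>
    Finset.single_le_sum (f := fun b => |M a b|) (fun _ _ => abs_nonneg _) (Finset.mem_univ b)

lemma abs_apply_le_sum_sum_abs {r : Type*} [Fintype r] (M : Matrix r r ℝ) (a b : r) :
    |M a b| ≤ ∑ a, ∑ b, |M a b| :=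
  (Finset.single_le_sum (f := fun a => |M a b|) (fun _ _ => abs_nonneg _) (Finset.mem_univ a)).trans
    (sum_abs_apply_le_sum_sum_abs M b)

lemma abs_fromBlocks_apply_le {m r : Type*} [Fintype r] {T : Matrix m m ℝ} {X : Matrix m r ℝ}
    {M : Matrix r r ℝ} {a : ℝ} (ha : 0 ≤ a) (hT : ∀ i j, |T i j| ≤ a) (hX : ∀ i b, |X i b| ≤ 1) :
    ∀ p q, |fromBlocks (T + X * M * Xᵀ) (X * M) (X * M)ᵀ M p q| ≤ a + ∑ a, ∑ b, |M a b| := by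
  have hXM (i b) := (abs_mul_apply_le_sum_abs hX M i b).trans (sum_abs_apply_le_sum_sum_abs M b)
  rintro (i | i) (j | j)
  · exact (abs_add_le _ _).trans (add_le_add (hT i j)
      (abs_mul_mul_transpose_apply_le_sum_abs hX M i j))
  · exact (hXM i j).trans (le_add_of_nonneg_left ha)
  · exact (hXM j i).trans (le_add_of_nonneg_left ha)
  · exact (abs_apply_le_sum_sum_abs M i j).trans (le_add_of_nonneg_left ha)

namespace InBtr

variable {t r : ℕ} {γ δ : Matrix (Fin t ⊕ Fin r) (Fin t ⊕ Fin r) ℝ}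

lemma isIntegerMatrix (hγ : InBtr t r γ) : IsIntegerMatrix γ := by
  obtain ⟨γ₁, γ₂, h₁, -, h₂, rfl⟩ := hγ
  exact .fromBlocks h₁ h₂ .zero .one

lemma mul (hγ : InBtr t r γ) (hδ : InBtr t r δ) : InBtr t r (γ * δ) := by
  obtain ⟨γ₁, γ₂, hγ₁, hγdet, hγ₂, rfl⟩ := hγ
  obtain ⟨δ₁, δ₂, hδ₁, hδdet, hδ₂, rfl⟩ := hδ
  refine ⟨γ₁ * δ₁, γ₁ * δ₂ + γ₂, hγ₁.mul hδ₁, ?_, (hγ₁.mul hδ₂).add hγ₂, ?_⟩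
  · rw [det_mul]
    rcases hγdet with h | h <;> rcases hδdet with h' | h' <;> simp [h, h']
  · simp [fromBlocks_multiply]

lemma exists_mul_eq_one (hγ : InBtr t r γ) : ∃ δ, InBtr t r δ ∧ δ * γ = 1 := by
  obtain ⟨γ₁, γ₂, hγ₁, hγdet, hγ₂, rfl⟩ := hγ
  have hunit : IsUnit γ₁.det := by rcases hγdet with h | h <;> simp [h]
  refine ⟨fromBlocks γ₁⁻¹ (-(γ₁⁻¹ * γ₂)) 0 1,
    ⟨γ₁⁻¹, _, hγ₁.inv hγdet, ?_, ((hγ₁.inv hγdet).mul hγ₂).neg, rfl⟩, ?_⟩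
  · rw [det_nonsing_inv]
    rcases hγdet with h | h <;> simp [h]
  · simp [fromBlocks_multiply, nonsing_inv_mul _ hunit, ← fromBlocks_one]

lemma exists_conj_eq (hγ : InBtr t r γ) (hδ : InBtr t r δ)
    {N N' : Matrix (Fin t ⊕ Fin r) (Fin t ⊕ Fin r) ℝ} (h : γ * N * γᵀ = δ * N' * δᵀ) :
    ∃ ε, InBtr t r ε ∧ ε * N * εᵀ = N' := by
  obtain ⟨δ', hδ', hδ'δ⟩ := hδ.exists_mul_eq_one
  refine ⟨δ' * γ, hδ'.mul hγ, ?_⟩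
  calc δ' * γ * N * (δ' * γ)ᵀ = δ' * (γ * N * γᵀ) * δ'ᵀ := by
        simp only [transpose_mul, Matrix.mul_assoc]
    _ = (δ' * δ) * N' * (δ' * δ)ᵀ := by
        rw [h]; simp only [transpose_mul, Matrix.mul_assoc]
    _ = N' := by simp [hδ'δ]

lemma isIntegerMatrix_two_smul_conj (hγ : InBtr t r γ)
    {N : Matrix (Fin t ⊕ Fin r) (Fin t ⊕ Fin r) ℝ} (hN : IsHalfIntegral N) :
    IsIntegerMatrix ((2 : ℝ) • (γ * N * γᵀ)) := by
  rw [← Matrix.smul_mul, ← Matrix.mul_smul]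
  exact (hγ.isIntegerMatrix.mul hN.isIntegerMatrix_two_smul).mul hγ.isIntegerMatrix.transpose

lemma conj_injective {S : Set (Matrix (Fin t ⊕ Fin r) (Fin t ⊕ Fin r) ℝ)}
    (hS : ∀ N ∈ S, ∀ N' ∈ S, N ≠ N' → ∀ γ, InBtr t r γ → γ * N * γᵀ ≠ N')
    {γ : S → Matrix (Fin t ⊕ Fin r) (Fin t ⊕ Fin r) ℝ} (hγ : ∀ N, InBtr t r (γ N)) :
    Function.Injective fun N : S => γ N * N.1 * (γ N)ᵀ := fun N N' h => by
  by_contra hNN'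
  obtain ⟨δ, hδ, hδN⟩ := (hγ N).exists_conj_eq (hγ N') h
  exact hS N N.2 N' N'.2 (Subtype.coe_ne_coe.mpr hNN') δ hδ hδN

end InBtr

lemma inBtr_fromBlocks_map_intCast {t r : ℕ} {U : Matrix (Fin t) (Fin t) ℤ} (hU : IsUnit U.det)
    (w : Matrix (Fin t) (Fin r) ℤ) :
    InBtr t r (fromBlocks (U.map ((↑) : ℤ → ℝ)) (w.map ((↑) : ℤ → ℝ)) 0 1) := by
  refine ⟨_, _, .map_intCast U, ?_, .map_intCast w, rfl⟩
  rw [← Int.cast_det]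
  rcases Int.isUnit_iff.mp hU with h | h <;> simp [h]

theorem exists_inBtr_abs_conj_apply_le_mul_det {t r : ℕ} {M : Matrix (Fin r) (Fin r) ℝ}
    (hM : LPlus M) : ∃ C : ℝ, ∀ N ∈ LtrPlus t r M, ∃ γ, InBtr t r γ ∧
      ∀ p q, |(γ * N * γᵀ) p q| ≤ C * N.det := by
  obtain ⟨hMsymm, hMpd, hMhalf⟩ := hM
  have hMunit : IsUnit M.det := isUnit_iff_ne_zero.mpr hMpd.det_pos.ne'
  set k := 2 * ((2 : ℝ) • M).det
  have hk : 0 < k := by simp only [k, det_smul]; have := hMpd.det_pos; positivity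
  set K := ∑ a, ∑ b, |M a b|
  set c := (4 / 3 : ℝ) ^ t.choose 2 * k ^ (t - 1) / M.det with hc
  refine ⟨c + K * 2 ^ (t + r), ?_⟩
  rintro N ⟨N₂, R₂, hN₂, hR₂, rfl, hN⟩
  rw [← transpose_smul] at hN ⊢
  set P := (1 / 2 : ℝ) • R₂
  obtain ⟨U, hU, hT⟩ := hN.2.1.fromBlocks_schur₂₂.exists_isUnit_det_abs_apply_le hk
    (hN₂.2.2.isIntegerMatrix_smul_schur hR₂ hMhalf hMunit.ne_zero)
  obtain ⟨w, hw⟩ := exists_abs_add_intCast_le (U.map ((↑) : ℤ → ℝ) * P * M⁻¹)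
  refine ⟨_, inBtr_fromBlocks_map_intCast hU w, fun p q => ?_⟩
  have hX : (U.map ((↑) : ℤ → ℝ) * P * M⁻¹ + w.map ((↑) : ℤ → ℝ)) * M =
      U.map ((↑) : ℤ → ℝ) * P + w.map ((↑) : ℤ → ℝ) * M := by
    rw [Matrix.add_mul, Matrix.mul_assoc _ M⁻¹, nonsing_inv_mul M hMunit, Matrix.mul_one]
  rw [fromBlocks_conj_eq _ _ _ N₂ P hMunit hMsymm hX]
  have hdet := hN.2.1.det_pos
  have hc0 : 0 ≤ c := by rw [hc]; have := hMpd.det_pos; positivity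
  have hK : K ≤ K * 2 ^ (t + r) * (fromBlocks N₂ P Pᵀ M).det := by
    have := hN.one_le_two_pow_mul_det
    rw [Fintype.card_sum, Fintype.card_fin, Fintype.card_fin] at this
    have : 0 ≤ K := Finset.sum_nonneg fun _ _ => Finset.sum_nonneg fun _ _ => abs_nonneg _
    nlinarith
  refine (abs_fromBlocks_apply_le (a := c * (fromBlocks N₂ P Pᵀ M).det) (by positivity)
    (fun i j => (hT i j).trans_eq ?_)
    (fun i b => (hw i b).trans (by norm_num)) p q).trans (by linarith)
  rw [det_fromBlocks_transpose₂₂ hMunit, Fintype.card_fin, hc]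
  field_simp [hMunit.ne_zero]

lemma summable_norm_rpow_neg_of_card_lt {κ : Type*} [Fintype κ] {s : ℝ} (hs : Fintype.card κ < s) :
    Summable fun z : κ → ℤ => ‖z‖ ^ (-s) := by
  let L := Submodule.span ℤ (Set.range (Pi.basisFun ℝ κ))
  have hL : Summable fun v : L => ‖v‖ ^ (-s) := ZLattice.summable_norm_rpow L (-s) (by
    rw [ZLattice.rank ℝ L, Module.finrank_fintype_fun_eq_card]; linarith)
  let f : (κ → ℤ) → L := fun z =>
    ⟨Int.cast ∘ z, ((Pi.basisFun ℝ κ).mem_span_iff_repr_mem ℤ _).mpr fun i => ⟨z i, by simp⟩⟩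
  have hf : Function.Injective f := fun z z' h => funext fun i => by
    simpa [f] using congrFun (congrArg Subtype.val h) i
  exact (hL.comp_injective hf).congr fun z => by simp [f, norm_intCast_comp]

lemma summable_rpow_neg_of_injective {α κ : Type*} [Fintype κ] {f : α → ℝ} {φ : α → κ → ℤ}
    (hφ : Function.Injective φ) (hf : ∀ x, 0 < f x) {C : ℝ}
    (hφf : ∀ x i, |(φ x i : ℝ)| ≤ C * f x) {s : ℝ} (hs : Fintype.card κ < s) :
    Summable fun x => f x ^ (-s) := by
  set C' := max C 1
  have hC' : 0 < C' := lt_max_of_lt_right one_pos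
  have hnorm (x) : ‖φ x‖ ≤ C' * f x := by
    refine (pi_norm_le_iff_of_nonneg (by have := hf x; positivity)).mpr fun i => ?_
    rw [← Int.norm_cast_real, Real.norm_eq_abs]
    exact (hφf x i).trans (by gcongr; exacts [(hf x).le, le_max_left _ _])
  refine Summable.of_norm_bounded_eventually
    (((summable_norm_rpow_neg_of_card_lt hs).comp_injective hφ).mul_left (C' ^ s)) ?_
  have hfin : {x | φ x = 0}.Finite :=
    Set.Subsingleton.finite fun a ha b hb => hφ (ha.trans hb.symm)
  filter_upwards [hfin.compl_mem_cofinite] with x hx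
  have hφx : 0 < ‖φ x‖ := norm_pos_iff.mpr hx
  rw [Real.norm_of_nonneg (Real.rpow_nonneg (hf x).le _), Function.comp_apply]
  have hs0 : 0 ≤ s := (Nat.cast_nonneg _).trans hs.le
  calc f x ^ (-s) ≤ (‖φ x‖ / C') ^ (-s) :=
        Real.rpow_le_rpow_of_nonpos (by positivity) ((div_le_iff₀' hC').mpr (hnorm x))
          (neg_nonpos.mpr hs0)
    _ = C' ^ s * ‖φ x‖ ^ (-s) := by
        rw [Real.div_rpow hφx.le hC'.le, Real.rpow_neg hC'.le, div_inv_eq_mul, mul_comm]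

theorem summable_det_rpow_neg_orbitReps_general {t r : ℕ}
    (M : Matrix (Fin r) (Fin r) ℝ) (hM : LPlus M) :
    ∃ s₀ : ℝ, ∀ s : ℝ, s₀ ≤ s →
      ∀ S : Set (Matrix (Fin t ⊕ Fin r) (Fin t ⊕ Fin r) ℝ),
        S ⊆ LtrPlus t r M →
        (∀ N ∈ S, ∀ N' ∈ S, N ≠ N' → ∀ γ, InBtr t r γ → γ * N * γᵀ ≠ N') →
        Summable fun N : S => (N : Matrix (Fin t ⊕ Fin r) (Fin t ⊕ Fin r) ℝ).det ^ (-s) := by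
  obtain ⟨C, hC⟩ := exists_inBtr_abs_conj_apply_le_mul_det (t := t) hM
  refine ⟨(t + r) ^ 2 + 1, fun s hs S hS hrep => ?_⟩
  have hN (N : S) : LPlus N.1 := by
    obtain ⟨-, -, -, -, -, h⟩ := hS N.2
    exact h
  choose γ hγ hγC using fun N : S => hC N (hS N.2)
  choose z hz using fun (N : S) (pq : (Fin t ⊕ Fin r) × (Fin t ⊕ Fin r)) =>
    (hγ N).isIntegerMatrix_two_smul_conj (hN N).2.2 pq.1 pq.2
  refine summable_rpow_neg_of_injective (φ := z) (fun N N' h => InBtr.conj_injective hrep hγ ?_)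
    (fun N => (hN N).2.1.det_pos) (C := 2 * C) (fun N pq => ?_) ?_
  · ext p q
    have := congrArg (Int.cast : ℤ → ℝ) (congrFun h (p, q))
    rw [← hz, ← hz] at this
    simpa using this
  · rw [← hz, Matrix.smul_apply, smul_eq_mul, abs_mul, abs_two]
    linarith [hγC N pq.1 pq.2]
  · simp only [Fintype.card_prod, Fintype.card_sum, Fintype.card_fin]
    push_cast
    linarith

/-- convergence of the Koecher–Maass type series over a set of
`B_{t,r}(ℤ)`-orbit representatives in `L_{t,r}^+(M)`: for sufficiently large real
`s` the family `(det N)^{-s}` is summable. -/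
theorem summable_det_rpow_neg_orbitReps {t r : ℕ} (ht : 1 ≤ t)
    (M : Matrix (Fin r) (Fin r) ℝ) (hM : LPlus M) :
    ∃ s₀ : ℝ, ∀ s : ℝ, s₀ ≤ s →
      ∀ S : Set (Matrix (Fin t ⊕ Fin r) (Fin t ⊕ Fin r) ℝ),
        S ⊆ LtrPlus t r M →
        (∀ N ∈ S, ∀ N' ∈ S, N ≠ N' → ∀ γ, InBtr t r γ → γ * N * γᵀ ≠ N') →
        Summable fun N : S => (N : Matrix (Fin t ⊕ Fin r) (Fin t ⊕ Fin r) ℝ).det ^ (-s) :=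
  summable_det_rpow_neg_orbitReps_general M hM
end
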